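/- Let 𝒜 = {A_1, …, A_K} with grade(A_k) = k, and suppose a word w of grade ≤ p contains a letter A_d with d ≥ p/2 + 1. Then some index d_j in w = A_{d_1}⋯A_{d_ℓ} satisfies d_j ≥ 2 + ∑_{i≠j} d_i; consequently the coefficient of w in the exact solution operator exp(Ω) vanishes, where this coefficient equals the iterated simplex integral of the product of shifted Legendre polynomials P_{d_1−1}(x_1)⋯P_{d_ℓ−1}(x_ℓ). -/

import Mathlib

open scoped BigOperators

/-- The shifted Legendre polynomial on `[0,1]`:
`P_k(x) = (−1)^k ∑_{j=0}^k C(k,j) C(k+j,j) (−1)^j x^j`. -/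
noncomputable def legP (k : ℕ) (x : ℝ) : ℝ :=
  (-1 : ℝ) ^ k *
    ∑ j ∈ Finset.range (k + 1),
      (Nat.choose k j : ℝ) * (Nat.choose (k + j) j : ℝ) * (-1 : ℝ) ^ j * x ^ j

/-- The iterated simplex integral
`∫_0^t ∫_0^{x₁} ⋯ P_{d₁−1}(x₁) P_{d₂−1}(x₂) ⋯ dx`. -/
noncomputable def legIter : List ℕ → ℝ → ℝ
  | [], _ => 1
  | d :: ds, t => ∫ x in (0 : ℝ)..t, legP (d - 1) x * legIter ds x

/-!
Write the word as `a ++ [c] ++ b` with `c ≥ grade a + grade b + 2`. The innermost integrations,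
over the letters of `b`, produce a polynomial in the variable of `c` of degree at most `grade b`.
Integrating by parts (equivalently, exchanging the order of integration) moves the outer
integrations, over the letters of `a`, onto a polynomial weight whose degree grows by the grade
of each letter. The coefficient is thus `∫₀¹ P_{c-1}(x) q(x) dx` with `deg q ≤ c - 2`, which
vanishes because, by Rodrigues' formula, `P_{c-1}` is orthogonal to polynomials of lower degree.
A letter of grade at least `p/2 + 1` in a word of grade at most `p` is such a `c`.
-/

open Polynomial
open scoped Nat

namespace Polynomial

theorem exists_integral_eq_eval_sub (q : ℝ[X]) :
    ∃ Q : ℝ[X], Q.natDegree ≤ q.natDegree + 1 ∧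
      ∀ a b : ℝ, ∫ x in a..b, q.eval x = Q.eval b - Q.eval a := by
  set Q : ℝ[X] := ∑ i ∈ Finset.range (q.natDegree + 1), C (q.coeff i / (i + 1)) * X ^ (i + 1)
  have hQ : derivative Q = q := by
    conv_rhs => rw [q.as_sum_range_C_mul_X_pow]
    simp only [Q, derivative_sum, derivative_C_mul_X_pow, Nat.add_sub_cancel]
    refine Finset.sum_congr rfl fun i _ => ?_
    push_cast
    rw [div_mul_cancel₀ _ (by positivity)]
  refine ⟨Q, natDegree_sum_le_of_forall_le _ _ fun i hi => ?_, fun a b => ?_⟩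
  · exact (natDegree_C_mul_X_pow_le _ _).trans (by simpa [Nat.lt_succ_iff] using hi)
  · exact intervalIntegral.integral_eq_sub_of_hasDerivAt (fun x _ => hQ ▸ Q.hasDerivAt x)
      (q.continuous.intervalIntegrable _ _)

theorem isRoot_iterate_derivative_of_pow_dvd {R : Type*} [CommRing R] {p : R[X]} {t : R}
    {n i : ℕ} (h : (X - C t) ^ n ∣ p) (hi : i < n) : (derivative^[i] p).IsRoot t :=
  dvd_iff_isRoot.mp <| (dvd_pow_self _ (Nat.sub_ne_zero_of_lt hi)).trans
    (pow_sub_dvd_iterate_derivative_of_pow_dvd i h)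

theorem integral_mul_derivative_eq_neg {p q : ℝ[X]} {a b : ℝ} (ha : q.IsRoot a)
    (hb : q.IsRoot b) :
    ∫ x in a..b, p.eval x * (derivative q).eval x =
      -∫ x in a..b, (derivative p).eval x * q.eval x := by
  rw [intervalIntegral.integral_mul_deriv_eq_deriv_mul (fun x _ => p.hasDerivAt x)
    (fun x _ => q.hasDerivAt x) (p.derivative.continuous.intervalIntegrable _ _)
    (q.derivative.continuous.intervalIntegrable _ _), ha.eq_zero, hb.eq_zero]
  ring

theorem integral_mul_iterate_derivative_eq_zero {g q : ℝ[X]} {a b : ℝ} {m : ℕ}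
    (hg : ∀ i < m, (derivative^[i] g).IsRoot a ∧ (derivative^[i] g).IsRoot b)
    (hq : q.natDegree < m) :
    ∫ x in a..b, q.eval x * (derivative^[m] g).eval x = 0 := by
  induction m generalizing q with
  | zero => simp at hq
  | succ m ih =>
    obtain ⟨ha, hb⟩ := hg m m.lt_succ_self
    rw [Function.iterate_succ_apply', integral_mul_derivative_eq_neg ha hb, neg_eq_zero]
    rcases m.eq_zero_or_pos with rfl | hm
    · simp [derivative_of_natDegree_zero (Nat.lt_one_iff.mp hq)]
    · exact ih (fun i hi => hg i (hi.trans m.lt_succ_self))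
        ((natDegree_derivative_le q).trans_lt (by omega))

theorem aeval_shiftedLegendre_eq_rodrigues (n : ℕ) (x : ℝ) :
    aeval x (shiftedLegendre n) =
      (n ! : ℝ)⁻¹ * (derivative^[n] (X ^ n * (1 - X : ℝ[X]) ^ n)).eval x := by
  have h := congrArg (fun p => (p.map (algebraMap ℤ ℝ)).eval x)
    (factorial_mul_shiftedLegendre_eq n)
  simp only [Polynomial.map_mul, Polynomial.map_natCast, eval_mul, eval_natCast,
    eval_map_algebraMap, ← iterate_derivative_map, Polynomial.map_pow, Polynomial.map_sub,
    Polynomial.map_one, map_X] at h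
  rw [← h]
  field_simp

theorem integral_mul_aeval_shiftedLegendre_eq_zero {n : ℕ} {q : ℝ[X]} (hq : q.natDegree < n) :
    ∫ x in (0:ℝ)..1, q.eval x * aeval x (shiftedLegendre n) = 0 := by
  have h₀ : (X - C 0) ^ n ∣ X ^ n * (1 - X : ℝ[X]) ^ n := by simp
  have h₁ : (X - C 1) ^ n ∣ X ^ n * (1 - X : ℝ[X]) ^ n :=
    (pow_dvd_pow_of_dvd ⟨-1, by simp⟩ n).mul_left _
  simp_rw [aeval_shiftedLegendre_eq_rodrigues, mul_left_comm _ (n ! : ℝ)⁻¹,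
    intervalIntegral.integral_const_mul]
  refine mul_eq_zero_of_right _ (integral_mul_iterate_derivative_eq_zero (fun i hi => ?_) hq)
  exact ⟨isRoot_iterate_derivative_of_pow_dvd h₀ hi,
    isRoot_iterate_derivative_of_pow_dvd h₁ hi⟩

end Polynomial

theorem intervalIntegral.integral_mul_integral_eq {u f : ℝ → ℝ} (hu : Continuous u)
    (hf : Continuous f) (a b : ℝ) :
    ∫ x in a..b, u x * ∫ y in a..x, f y = ∫ x in a..b, (∫ y in x..b, u y) * f x := by
  have hU (x : ℝ) : HasDerivAt (fun x => ∫ y in x..b, u y) (-u x) x := by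
    have h : (fun x => ∫ y in x..b, u y) = fun x => -∫ y in b..x, u y :=
      funext fun x => intervalIntegral.integral_symm b x
    rw [h]
    exact (hu.integral_hasStrictDerivAt b x).hasDerivAt.neg
  have hF (x : ℝ) : HasDerivAt (fun x => ∫ y in a..x, f y) (f x) x :=
    (hf.integral_hasStrictDerivAt a x).hasDerivAt
  rw [intervalIntegral.integral_mul_deriv_eq_deriv_mul (fun x _ => hU x) (fun x _ => hF x)
    (hu.neg.intervalIntegrable _ _) (hf.intervalIntegrable _ _)]
  simp [intervalIntegral.integral_neg]

theorem legP_eq_neg_one_pow_mul_aeval (k : ℕ) (x : ℝ) :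
    legP k x = (-1) ^ k * aeval x (shiftedLegendre k) := by
  simp only [legP, shiftedLegendre, map_sum, map_mul, aeval_C, aeval_X_pow]
  congr 1
  refine Finset.sum_congr rfl fun j _ => ?_
  rw [Nat.choose_symm_add]
  push_cast
  ring

theorem continuous_legP (k : ℕ) : Continuous (legP k) := by
  unfold legP
  fun_prop

noncomputable def legPoly (k : ℕ) : ℝ[X] :=
  C ((-1) ^ k) * (shiftedLegendre k).map (algebraMap ℤ ℝ)

theorem eval_legPoly (k : ℕ) (x : ℝ) : (legPoly k).eval x = legP k x := by
  rw [legPoly, eval_mul, eval_C, eval_map_algebraMap, legP_eq_neg_one_pow_mul_aeval]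

theorem natDegree_legPoly_le (k : ℕ) : (legPoly k).natDegree ≤ k :=
  (natDegree_C_mul_le _ _).trans ((natDegree_map_le).trans (natDegree_shiftedLegendre k).le)

theorem integral_mul_legP_eq_zero {k : ℕ} {q : ℝ[X]} (hq : q.natDegree < k) :
    ∫ x in (0:ℝ)..1, q.eval x * legP k x = 0 := by
  simp_rw [legP_eq_neg_one_pow_mul_aeval, mul_left_comm _ ((-1 : ℝ) ^ k),
    intervalIntegral.integral_const_mul, integral_mul_aeval_shiftedLegendre_eq_zero hq, mul_zero]

theorem continuous_legIter (ds : List ℕ) : Continuous (legIter ds) := by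
  induction ds with
  | nil => exact continuous_const
  | cons d ds ih =>
    exact intervalIntegral.continuous_primitive
      (fun a b => ((continuous_legP _).mul ih).intervalIntegrable a b) 0

theorem exists_legIter_eq_eval (ds : List ℕ) (hds : ∀ d ∈ ds, 1 ≤ d) :
    ∃ V : ℝ[X], V.natDegree ≤ ds.sum ∧ ∀ x, legIter ds x = V.eval x := by
  induction ds with
  | nil => exact ⟨1, by simp, fun x => by simp [legIter]⟩
  | cons d ds ih =>
    obtain ⟨V, hV, hVeval⟩ := ih fun e he => hds e (List.mem_cons_of_mem d he)
    obtain ⟨Q, hQ, hQint⟩ := exists_integral_eq_eval_sub (legPoly (d - 1) * V)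
    refine ⟨Q - C (Q.eval 0), ?_, fun x => ?_⟩
    · have := (natDegree_mul_le (p := legPoly (d - 1)) (q := V)).trans
        (add_le_add (natDegree_legPoly_le (d - 1)) hV)
      have hd := hds d List.mem_cons_self
      rw [natDegree_sub_C, List.sum_cons]
      omega
    · simp only [legIter, eval_sub, eval_C, ← hQint, eval_mul, eval_legPoly, hVeval]

theorem exists_integral_mul_legIter_cons (w : ℝ[X]) (e : ℕ) (ds : List ℕ) :
    ∃ W : ℝ[X], W.natDegree ≤ w.natDegree + 1 ∧
      ∫ x in (0:ℝ)..1, w.eval x * legIter (e :: ds) x =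
        ∫ x in (0:ℝ)..1, W.eval x * legP (e - 1) x * legIter ds x := by
  obtain ⟨U, hU, hUint⟩ := exists_integral_eq_eval_sub w
  -- `W x = ∫ y in x..1, w.eval y`
  refine ⟨C (U.eval 1) - U, (natDegree_sub_le _ _).trans (by simpa using hU), ?_⟩
  simp only [legIter]
  rw [intervalIntegral.integral_mul_integral_eq (f := fun x => legP (e - 1) x * legIter ds x)
    w.continuous ((continuous_legP _).mul (continuous_legIter ds))]
  simp only [hUint, eval_sub, eval_C, mul_assoc]

theorem integral_mul_legP_mul_legIter_eq_zero {b : List ℕ} {c : ℕ} (hb : ∀ d ∈ b, 1 ≤ d)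
    {w : ℝ[X]} (h : w.natDegree + b.sum + 2 ≤ c) :
    ∫ x in (0:ℝ)..1, w.eval x * legP (c - 1) x * legIter b x = 0 := by
  obtain ⟨V, hV, hVeval⟩ := exists_legIter_eq_eval b hb
  simp only [hVeval, mul_right_comm _ (legP _ _), ← eval_mul]
  exact integral_mul_legP_eq_zero (natDegree_mul_le.trans_lt (by omega))

theorem integral_mul_legIter_append_cons_eq_zero {a b : List ℕ} {c : ℕ}
    (ha : ∀ d ∈ a, 1 ≤ d) (hb : ∀ d ∈ b, 1 ≤ d) {w : ℝ[X]}
    (h : w.natDegree + a.sum + b.sum + 3 ≤ c) :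
    ∫ x in (0:ℝ)..1, w.eval x * legIter (a ++ c :: b) x = 0 := by
  induction a generalizing w with
  | nil =>
    obtain ⟨W, hW, hWint⟩ := exists_integral_mul_legIter_cons w c b
    rw [List.nil_append, hWint]
    exact integral_mul_legP_mul_legIter_eq_zero hb (by simp only [List.sum_nil] at h; omega)
  | cons d a ih =>
    obtain ⟨W, hW, hWint⟩ := exists_integral_mul_legIter_cons w d (a ++ c :: b)
    rw [List.cons_append, hWint]
    simp only [← eval_legPoly, ← eval_mul]
    refine ih (fun e he => ha e (List.mem_cons_of_mem d he)) ?_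
    have := natDegree_mul_le.trans (add_le_add hW (natDegree_legPoly_le (d - 1)))
    have hd := ha d List.mem_cons_self
    rw [List.sum_cons] at h
    omega

theorem legIter_append_cons_eq_zero {a b : List ℕ} {c : ℕ}
    (ha : ∀ d ∈ a, 1 ≤ d) (hb : ∀ d ∈ b, 1 ≤ d) (h : a.sum + b.sum + 2 ≤ c) :
    legIter (a ++ c :: b) 1 = 0 := by
  cases a with
  | nil =>
    simpa [legIter] using
      integral_mul_legP_mul_legIter_eq_zero (w := 1) hb (by simpa using h)
  | cons d a =>
    simp only [List.cons_append, legIter, ← eval_legPoly]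
    refine integral_mul_legIter_append_cons_eq_zero
      (fun e he => ha e (List.mem_cons_of_mem d he)) hb ?_
    have := natDegree_legPoly_le (d - 1)
    have hd := ha d List.mem_cons_self
    rw [List.sum_cons] at h
    omega

/-- Let `p` be even and let `w = A_{d₁}⋯A_{d_ℓ}` be a word of grade
`d₁ + ⋯ + d_ℓ ≤ p` containing a letter `A_{d_{j₀}}` with `d_{j₀} ≥ p/2 + 1`.  Then some
index `d_j` exceeds the sum of the others by at least 2, and consequently the coefficient
of `w` in the exact solution operator `exp(Ω)` — the iterated simplex integral of
`P_{d₁−1}(x₁)⋯P_{d_ℓ−1}(x_ℓ)` — vanishes. -/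
theorem high_letter_coeff_vanishes (p ℓ : ℕ) (hp : Even p)
    (d : Fin ℓ → ℕ) (hd : ∀ j, 1 ≤ d j)
    (hgrade : ∑ j : Fin ℓ, d j ≤ p)
    (j₀ : Fin ℓ) (hbig : p / 2 + 1 ≤ d j₀) :
    (∃ j : Fin ℓ, 2 + ∑ i ∈ Finset.univ.erase j, d i ≤ d j) ∧
    legIter (List.ofFn d) 1 = 0 := by
  obtain ⟨q, rfl⟩ := hp
  have hsplit := Finset.sum_erase_add _ d (Finset.mem_univ j₀)
  refine ⟨⟨j₀, by omega⟩, ?_⟩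
  obtain ⟨a, b, hab⟩ := List.mem_iff_append.mp (List.mem_ofFn.mpr ⟨j₀, rfl⟩)
  have hletters : ∀ e ∈ List.ofFn d, 1 ≤ e := by
    simpa only [List.forall_mem_ofFn_iff] using hd
  have hsum := List.sum_ofFn (f := d)
  rw [hab, List.sum_append, List.sum_cons] at hsum
  rw [hab] at hletters ⊢
  exact legIter_append_cons_eq_zero (fun e he => hletters e (by simp [he]))
    (fun e he => hletters e (by simp [he])) (by omega)
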